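/- Let L be a Laplacian (zero row sums) of a graph with an external equitable partition π with M cells, P the characteristic matrix, P_H the associated projection, R = I_N − P_H, and L_π = (PᵀP)⁻¹PᵀLP the quotient Laplacian. Then the characteristic polynomial of RL equals x^M times the quotient of the characteristic polynomial of L by the characteristic polynomial of L_π; i.e., char(RL)·char(L_π) = x^M · char(L). -/

import Mathlib

/-!
Write `L = R L + P_H L`. The EEP condition `L P_H = P_H L P_H` says exactly that
`(R L)(P_H L) = 0`, and for matrices with `A B = 0` one has `(x - A)(x - B) = x (x - (A + B))`,
so `char(R L) · char(P_H L) = x^N · char(L)`. Finally `P_H L = P · ((PᵀP)⁻¹ Pᵀ L)`, and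
swapping the two factors gives `x^M · char(P_H L) = x^N · char(L_π)`.
-/

open Matrix Polynomial

theorem Matrix.charpoly_mul_charpoly_of_mul_eq_zero {n R : Type*} [Fintype n] [DecidableEq n]
    [CommRing R] {A B : Matrix n n R} (hAB : A * B = 0) :
    A.charpoly * B.charpoly = X ^ Fintype.card n * (A + B).charpoly := by
  have hABC : A.map C * B.map (C : R →+* R[X]) = 0 := by
    rw [← Matrix.map_mul, hAB, Matrix.map_zero _ (map_zero C)]
  have hcomm : A.map C * scalar n (X : R[X]) = scalar n X * A.map C :=
    ((scalar_commute _ (Commute.all X) _).eq).symm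
  have hcharmatrix : charmatrix A * charmatrix B = scalar n X * charmatrix (A + B) := by
    simp only [charmatrix, RingHom.mapMatrix_apply, Matrix.map_add C (map_add C), sub_mul,
      mul_sub, mul_add, hABC, hcomm]
    abel
  have := congrArg det hcharmatrix
  rwa [det_mul, det_mul, scalar_apply, det_diagonal, Finset.prod_const, Finset.card_univ] at this

theorem Matrix.charpoly_one_sub_mul_mul_charpoly_of_invariant {n m R : Type*}
    [Fintype n] [Fintype m] [DecidableEq n] [DecidableEq m] [CommRing R]
    (P : Matrix n m R) (Q : Matrix m n R) (L : Matrix n n R)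
    (hL : L * (P * Q) = P * Q * L * (P * Q)) :
    ((1 - P * Q) * L).charpoly * (Q * L * P).charpoly = X ^ Fintype.card m * L.charpoly := by
  have hmul : (1 - P * Q) * L * (P * Q * L) = 0 := by
    rw [← Matrix.mul_assoc, Matrix.sub_mul, Matrix.sub_mul, Matrix.one_mul, hL, sub_self,
      Matrix.zero_mul]
  have hsum : (1 - P * Q) * L + P * Q * L = L := by
    rw [Matrix.sub_mul, Matrix.one_mul, sub_add_cancel]
  have hsplit := charpoly_mul_charpoly_of_mul_eq_zero hmul
  rw [hsum] at hsplit
  have hcomm := charpoly_mul_comm' P (Q * L)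
  rw [← Matrix.mul_assoc] at hcomm
  refine (isRegular_X_pow (R := R) (Fintype.card n)).left.eq_iff.mp ?_
  linear_combination (-((1 - P * Q) * L).charpoly) * hcomm + X ^ Fintype.card m * hsplit

theorem stmt16_general (N M : ℕ)
    (P : Matrix (Fin N) (Fin M) ℝ)
    (PH R : Matrix (Fin N) (Fin N) ℝ)
    (hPH : PH = P * (Pᵀ * P)⁻¹ * Pᵀ)
    (hR : R = 1 - PH)
    (L : Matrix (Fin N) (Fin N) ℝ)
    (hEEP : L * PH = PH * L * PH)
    (Lpi : Matrix (Fin M) (Fin M) ℝ)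
    (hLpi : Lpi = (Pᵀ * P)⁻¹ * Pᵀ * L * P) :
    (R * L).charpoly * Lpi.charpoly = Polynomial.X ^ M * L.charpoly := by
  rw [hPH, Matrix.mul_assoc P] at hEEP
  subst hR hPH hLpi
  simpa only [Matrix.mul_assoc P, Fintype.card_fin] using
    charpoly_one_sub_mul_mul_charpoly_of_invariant P ((Pᵀ * P)⁻¹ * Pᵀ) L hEEP

theorem stmt16 (N M : ℕ) (f : Fin N → Fin M) (hf : Function.Surjective f)
    (P : Matrix (Fin N) (Fin M) ℝ)
    (hP : ∀ i j, P i j = if f i = j then 1 else 0)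
    (PH R : Matrix (Fin N) (Fin N) ℝ)
    (hPH : PH = P * (Pᵀ * P)⁻¹ * Pᵀ)
    (hR : R = 1 - PH)
    (L : Matrix (Fin N) (Fin N) ℝ)
    (hLap : L.mulVec (fun _ => 1) = 0)
    (hEEP : L * PH = PH * L * PH)
    (Lpi : Matrix (Fin M) (Fin M) ℝ)
    (hLpi : Lpi = (Pᵀ * P)⁻¹ * Pᵀ * L * P) :
    (R * L).charpoly * Lpi.charpoly = Polynomial.X ^ M * L.charpoly :=
  stmt16_general N M P PH R hPH hR L hEEP Lpi hLpi
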